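/- If x, y ∈ ℝⁿ (n ≥ 3) and |x−y| = (√(2+2/n))^k · (2/n)^l for some non-negative integers k, l, then there exists a finite set S ⊆ ℝⁿ containing x and y such that every map f: S → ℂⁿ preserving unit distance also satisfies φₙ(f(x),f(y)) = |x−y|². -/

import Mathlib

noncomputable def phi (n : ℕ) (x y : Fin n → ℂ) : ℂ := ∑ i, (x i - y i) ^ 2

/-- `f` preserves unit distance on the set `S`. -/
def UnitPreservingOn (n : ℕ) (S : Set (EuclideanSpace ℝ (Fin n)))
    (f : EuclideanSpace ℝ (Fin n) → (Fin n → ℂ)) : Prop :=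
  ∀ a ∈ S, ∀ b ∈ S, dist a b = 1 → phi n (f a) (f b) = 1

/-- `d ∈ Dₙ`: `d > 0` and for all `x y` at distance `d` there is a finite set `S`
containing `x` and `y` such that every unit-distance preserving map `f : S → ℂⁿ`
satisfies `φₙ(f x, f y) = d²`. -/
def MemD (n : ℕ) (d : ℝ) : Prop :=
  0 < d ∧ ∀ x y : EuclideanSpace ℝ (Fin n), dist x y = d →
    ∃ S : Finset (EuclideanSpace ℝ (Fin n)), x ∈ S ∧ y ∈ S ∧
      ∀ f : EuclideanSpace ℝ (Fin n) → (Fin n → ℂ),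
        UnitPreservingOn n (↑S) f → phi n (f x) (f y) = (d : ℂ) ^ 2

/-!
Write `α = √(2 + 2/n)`. The distances forced by finitely many unit-distance constraints contain
`1`, and are closed under `d ↦ α d` and, given `d`, `α d` and `α² d`, under `d ↦ (2/n) d`;
induction then gives every `α^k (2/n)^l`.

Both steps rest on a regular simplex `Q` of `n` points in `ℝⁿ` and on points of its axis. If
`φ(f q, f q') = s²` on the edges of `Q`, then every `Z` with `φ(Z, f q) = r` for all `q ∈ Q`
satisfies `Z - C ∈ N` and `φ(Z, C) = r - (n-1)s²/(2n)`, where `C` is the centroid of `f(Q)` and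
`N`, the dot-orthogonal of the edges of `f(Q)`, is a line: the Gram matrix `(s²/2)(I + J)` of the
edges at a vertex is invertible. So the images of axis points lie on one line through `C`, at
heights fixed up to sign. For `d ↦ α d`, the two apexes `x, y` over a simplex of side `d` go to
`f x = f y` or to opposite heights, where `φ = α² d²`; a point `z` with `|z - x| = d` and
`|z - y| = α d` rules out `f x = f y`. For `d ↦ (2/n) d` the simplex has side `α d` and four axis
points `x, y, u, u'` sit at heights `±d/n` and `±(d/n + d)`: `|u - u'| = α² d` makes the images
of `u, u'` opposite, and then `|x - u| = |y - u'| = d` makes those of `x, y` opposite.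
-/

open Matrix
open Finset hiding centroid

def circumradiusSq {K : Type*} [Field K] (n : ℕ) (σ : K) : K := (n - 1) * σ / (2 * n)

section ComplexAlgebra

variable {n : ℕ}

lemma phi_eq_dotProduct (x y : Fin n → ℂ) : phi n x y = (x - y) ⬝ᵥ (x - y) := by
  simp only [phi, dotProduct, Pi.sub_apply, sq]

lemma phi_comm (x y : Fin n → ℂ) : phi n x y = phi n y x := by
  simp only [phi_eq_dotProduct, ← neg_sub y x, neg_dotProduct, dotProduct_neg, neg_neg]

lemma phi_self (x : Fin n → ℂ) : phi n x x = 0 := by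
  simp [phi_eq_dotProduct]

lemma phi_eq_sub_two_mul_dotProduct (x y c : Fin n → ℂ) :
    phi n x y = phi n x c + phi n y c - 2 * ((x - c) ⬝ᵥ (y - c)) := by
  rw [phi_eq_dotProduct, phi_eq_dotProduct, phi_eq_dotProduct, ← sub_sub_sub_cancel_right x y c]
  simp only [sub_dotProduct, dotProduct_sub]
  rw [dotProduct_comm c x, dotProduct_comm c y, dotProduct_comm y x]
  ring

lemma phi_eq_dotProduct_sub_sub (x y c : Fin n → ℂ) :
    phi n x y = (x - c) ⬝ᵥ (x - c) + (y - c) ⬝ᵥ (y - c) - 2 * ((x - c) ⬝ᵥ (y - c)) := by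
  rw [phi_eq_sub_two_mul_dotProduct x y c, phi_eq_dotProduct x, phi_eq_dotProduct y]

lemma two_mul_dotProduct_sub_sub (z c a b : Fin n → ℂ) :
    2 * ((z - c) ⬝ᵥ (a - b)) = phi n z b - phi n z a - phi n c b + phi n c a := by
  simp only [phi_eq_dotProduct, sub_dotProduct, dotProduct_sub, dotProduct_comm z,
    dotProduct_comm c]
  ring

variable {ι : Type*}

def IsEquilateral (P : ι → Fin n → ℂ) (σ : ℂ) : Prop :=
  ∀ i j, i ≠ j → phi n (P i) (P j) = σ

def normalSpace (P : ι → Fin n → ℂ) : Submodule ℂ (Fin n → ℂ) where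
  carrier := {w | ∀ i j, w ⬝ᵥ (P i - P j) = 0}
  add_mem' hv hw i j := by rw [add_dotProduct, hv i j, hw i j, add_zero]
  zero_mem' _ _ := zero_dotProduct _
  smul_mem' c w hw i j := by rw [smul_dotProduct, hw i j, smul_zero]

lemma IsEquilateral.dotProduct_sub_sub_sub [DecidableEq ι] {P : ι → Fin n → ℂ} {σ : ℂ}
    (hP : IsEquilateral P σ) {a b c : ι} (hac : a ≠ c) (hbc : b ≠ c) :
    (P a - P c) ⬝ᵥ (P b - P c) = σ / 2 + if a = b then σ / 2 else 0 := by
  rcases eq_or_ne a b with rfl | hab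
  · rw [if_pos rfl, ← phi_eq_dotProduct, hP _ _ hac]
    ring
  · have h := phi_eq_sub_two_mul_dotProduct (P a) (P b) (P c)
    rw [hP _ _ hac, hP _ _ hbc, hP _ _ hab] at h
    rw [if_neg hab]
    linear_combination h / 2

variable [Fintype ι]

noncomputable def centroid (P : ι → Fin n → ℂ) : Fin n → ℂ :=
  (Fintype.card ι : ℂ)⁻¹ • ∑ i, P i

lemma eq_zero_of_sum_smul_dotProduct_eq_zero [DecidableEq ι] {v : ι → Fin n → ℂ} {τ : ℂ}
    (hτ : τ ≠ 0) (hv : ∀ i j, v i ⬝ᵥ v j = τ + if i = j then τ else 0) {c : ι → ℂ}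
    (hc : ∀ j, (∑ i, c i • v i) ⬝ᵥ v j = 0) : c = 0 := by
  have hc' : ∀ j, c j = -∑ i, c i := by
    intro j
    have h := hc j
    simp only [sum_dotProduct, smul_dotProduct, hv, smul_eq_mul, mul_add, mul_ite, mul_zero,
      sum_add_distrib, sum_ite_eq', mem_univ, if_true, ← sum_mul] at h
    have h' : (∑ i, c i + c j) * τ = 0 := by linear_combination h
    linear_combination (mul_eq_zero.1 h').resolve_right hτ
  have hsum : ∑ i, c i = 0 := by
    have h : ∑ j, c j = ∑ _j : ι, -∑ i, c i := sum_congr rfl fun j _ => hc' j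
    rw [sum_const, card_univ, nsmul_eq_mul] at h
    have h' : ((Fintype.card ι + 1 : ℕ) : ℂ) * ∑ i, c i = 0 := by push_cast; linear_combination h
    exact (mul_eq_zero.1 h').resolve_left (Nat.cast_ne_zero.2 (Nat.succ_ne_zero _))
  funext j
  rw [hc' j, hsum, neg_zero, Pi.zero_apply]

variable [Nonempty ι] (P : ι → Fin n → ℂ)

lemma sum_sub_centroid : ∑ i, (P i - centroid P) = 0 := by
  have hcard : (Fintype.card ι : ℂ) ≠ 0 := Nat.cast_ne_zero.2 Fintype.card_ne_zero
  rw [sum_sub_distrib, sum_const, card_univ, centroid, ← Nat.cast_smul_eq_nsmul ℂ, smul_smul,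
    mul_inv_cancel₀ hcard, one_smul, sub_self]

lemma sum_phi_eq_card_mul_phi_centroid_add (z : Fin n → ℂ) :
    ∑ i, phi n z (P i) =
      Fintype.card ι * phi n z (centroid P) + ∑ i, phi n (centroid P) (P i) := by
  have hcross : ∑ i, (z - centroid P) ⬝ᵥ (P i - centroid P) = 0 := by
    rw [← dotProduct_sum, sum_sub_centroid, dotProduct_zero]
  simp_rw [phi_eq_sub_two_mul_dotProduct z (P _) (centroid P), phi_comm (P _) (centroid P)]
  rw [sum_sub_distrib, sum_add_distrib, ← mul_sum, hcross, sum_const, card_univ, nsmul_eq_mul]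
  ring

variable {P} {σ : ℂ}

lemma IsEquilateral.sum_phi (hP : IsEquilateral P σ) (i : ι) :
    ∑ j, phi n (P i) (P j) = (Fintype.card ι - 1) * σ := by
  classical
  rw [← add_sum_erase _ _ (mem_univ i), phi_self, zero_add,
    sum_congr rfl fun j hj => hP i j (ne_of_mem_erase hj).symm, sum_const,
    card_erase_of_mem (mem_univ i), card_univ, nsmul_eq_mul,
    Nat.cast_sub Fintype.card_pos, Nat.cast_one]

lemma IsEquilateral.sum_phi_centroid (hP : IsEquilateral P σ) :
    ∑ i, phi n (centroid P) (P i) = (Fintype.card ι - 1) * σ / 2 := by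
  have hcard : (Fintype.card ι : ℂ) ≠ 0 := Nat.cast_ne_zero.2 Fintype.card_ne_zero
  have h := Finset.sum_congr rfl fun i (_ : i ∈ univ) =>
    (sum_phi_eq_card_mul_phi_centroid_add P (P i)).symm.trans (hP.sum_phi i)
  simp_rw [sum_add_distrib, ← mul_sum, phi_comm (P _) (centroid P), sum_const, card_univ,
    nsmul_eq_mul] at h
  apply mul_left_cancel₀ hcard
  linear_combination h / 2

lemma IsEquilateral.phi_centroid_of_forall_phi_eq (hP : IsEquilateral P σ) {z : Fin n → ℂ}
    {r : ℂ} (hz : ∀ i, phi n z (P i) = r) :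
    phi n z (centroid P) = r - circumradiusSq (Fintype.card ι) σ := by
  have hcard : (Fintype.card ι : ℂ) ≠ 0 := Nat.cast_ne_zero.2 Fintype.card_ne_zero
  have h := sum_phi_eq_card_mul_phi_centroid_add P z
  simp only [hz, sum_const, card_univ, nsmul_eq_mul, hP.sum_phi_centroid] at h
  rw [circumradiusSq]
  field_simp
  linear_combination -2 * h

lemma IsEquilateral.phi_vertex_centroid (hP : IsEquilateral P σ) (i : ι) :
    phi n (P i) (centroid P) = circumradiusSq (Fintype.card ι) σ := by
  have hcard : (Fintype.card ι : ℂ) ≠ 0 := Nat.cast_ne_zero.2 Fintype.card_ne_zero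
  have h := sum_phi_eq_card_mul_phi_centroid_add P (P i)
  rw [hP.sum_phi, hP.sum_phi_centroid] at h
  rw [circumradiusSq]
  field_simp
  linear_combination -2 * h

lemma IsEquilateral.sub_centroid_mem_normalSpace (hP : IsEquilateral P σ) {z : Fin n → ℂ} {r : ℂ}
    (hz : ∀ i, phi n z (P i) = r) : z - centroid P ∈ normalSpace P := by
  intro i j
  have h := two_mul_dotProduct_sub_sub z (centroid P) (P i) (P j)
  rw [hz, hz, phi_comm (centroid P), phi_comm (centroid P), hP.phi_vertex_centroid,
    hP.phi_vertex_centroid] at h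
  simpa using h

end ComplexAlgebra

section NormalLine

variable {n : ℕ} {σ : ℂ} {P : Fin n → Fin n → ℂ}

theorem IsEquilateral.span_finCons_eq_top {m : ℕ} {P : Fin (m + 1) → Fin (m + 1) → ℂ}
    (hP : IsEquilateral P σ) (hσ : σ ≠ 0) {w : Fin (m + 1) → ℂ} (hw : w ∈ normalSpace P)
    (hw0 : w ≠ 0) :
    Submodule.span ℂ (Set.range (Fin.cons w fun i => P i.succ - P 0)) = ⊤ := by
  have hgram := fun c => eq_zero_of_sum_smul_dotProduct_eq_zero
    (v := fun i : Fin m => P i.succ - P 0) (div_ne_zero hσ two_ne_zero) (c := c) fun i j => by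
      simp only [hP.dotProduct_sub_sub_sub (Fin.succ_ne_zero i) (Fin.succ_ne_zero j),
        Fin.succ_inj]
  refine LinearIndependent.span_eq_top_of_card_eq_finrank ?_ (by simp)
  refine linearIndependent_finCons.2 ⟨Fintype.linearIndependent_iff.2 fun c hc i => ?_, ?_⟩
  · exact congrFun (hgram c fun j => by rw [hc, zero_dotProduct]) i
  · intro hmem
    obtain ⟨c, hc⟩ := (Submodule.mem_span_range_iff_exists_fun ℂ).1 hmem
    have hc0 : c = 0 := hgram c fun j => by rw [hc]; exact hw j.succ 0
    exact hw0 (by simp [← hc, hc0])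

/-- `normalSpace P` is at most a line: the edges `P i - P 0` span a complement
of it on which the dot product is nondegenerate. -/
theorem IsEquilateral.smul_eq_smul_of_mem_normalSpace (hP : IsEquilateral P σ) (hσ : σ ≠ 0)
    {w w' : Fin n → ℂ} (hw : w ∈ normalSpace P) (hw' : w' ∈ normalSpace P) :
    (w' ⬝ᵥ w') • w = (w ⬝ᵥ w') • w' := by
  rcases eq_or_ne w' 0 with rfl | hw'0
  · simp
  obtain ⟨m, rfl⟩ : ∃ m, n = m + 1 :=
    Nat.exists_eq_succ_of_ne_zero (by rintro rfl; exact hw'0 (Subsingleton.elim _ _))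
  have hperp : ∀ i, ((w' ⬝ᵥ w') • w - (w ⬝ᵥ w') • w') ⬝ᵥ
      (Fin.cons w' fun i => P i.succ - P 0 : Fin (m + 1) → Fin (m + 1) → ℂ) i = 0 := by
    refine Fin.cases ?_ fun i => ?_
    · simp [sub_dotProduct, smul_dotProduct, dotProduct_comm w w', mul_comm]
    · change _ ⬝ᵥ (P i.succ - P 0) = 0
      rw [sub_dotProduct, smul_dotProduct, smul_dotProduct, hw i.succ 0, hw' i.succ 0,
        smul_zero, smul_zero, sub_self]
  rw [← sub_eq_zero, ← dotProduct_eq_zero_iff]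
  intro z
  have hz : z ∈ Submodule.span ℂ _ :=
    (hP.span_finCons_eq_top hσ hw' hw'0).symm ▸ Submodule.mem_top
  obtain ⟨c, rfl⟩ := (Submodule.mem_span_range_iff_exists_fun ℂ).1 hz
  simp [dotProduct_sum, dotProduct_smul, hperp]

theorem IsEquilateral.eq_of_dotProduct_eq (hP : IsEquilateral P σ) (hσ : σ ≠ 0)
    {w w' w₀ : Fin n → ℂ} (hw : w ∈ normalSpace P) (hw' : w' ∈ normalSpace P)
    (hw₀ : w₀ ∈ normalSpace P) (h₀ : w₀ ⬝ᵥ w₀ ≠ 0) (h : w ⬝ᵥ w₀ = w' ⬝ᵥ w₀) : w = w' := by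
  refine smul_right_injective _ h₀ ?_
  dsimp only
  rw [hP.smul_eq_smul_of_mem_normalSpace hσ hw hw₀,
    hP.smul_eq_smul_of_mem_normalSpace hσ hw' hw₀, h]

variable [NeZero n] {X Y : Fin n → ℂ} {r : ℂ}

lemma IsEquilateral.dotProduct_sub_centroid_self (hP : IsEquilateral P σ)
    (hX : ∀ i, phi n X (P i) = r) :
    (X - centroid P) ⬝ᵥ (X - centroid P) = r - circumradiusSq n σ := by
  rw [← phi_eq_dotProduct, hP.phi_centroid_of_forall_phi_eq hX, Fintype.card_fin]

theorem IsEquilateral.eq_or_phi_eq (hP : IsEquilateral P σ) (hσ : σ ≠ 0)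
    (hX : ∀ i, phi n X (P i) = r) (hY : ∀ i, phi n Y (P i) = r)
    (hr : r - circumradiusSq n σ ≠ 0) :
    X = Y ∨ phi n X Y = 4 * (r - circumradiusSq n σ) := by
  have hXX := hP.dotProduct_sub_centroid_self hX
  have hYY := hP.dotProduct_sub_centroid_self hY
  have hXn := hP.sub_centroid_mem_normalSpace hX
  have hYn := hP.sub_centroid_mem_normalSpace hY
  set C := centroid P
  have hsq : ((X - C) ⬝ᵥ (Y - C)) ^ 2 = (r - circumradiusSq n σ) ^ 2 := by
    have h := congrArg (· ⬝ᵥ (X - C)) (hP.smul_eq_smul_of_mem_normalSpace hσ hXn hYn)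
    simp only [smul_dotProduct, smul_eq_mul, hXX, hYY, dotProduct_comm (Y - C)] at h
    linear_combination -h
  rcases sq_eq_sq_iff_eq_or_eq_neg.1 hsq with hT | hT
  · left
    exact sub_left_injective
      (hP.eq_of_dotProduct_eq hσ hXn hYn hYn (hYY ▸ hr) (hT.trans hYY.symm))
  · right
    rw [phi_eq_dotProduct_sub_sub X Y C, hXX, hYY, hT]
    ring

theorem IsEquilateral.phi_eq_of_antipodal (hP : IsEquilateral P σ) (hσ : σ ≠ 0)
    {U U' : Fin n → ℂ} {r' : ℂ} (hX : ∀ i, phi n X (P i) = r) (hY : ∀ i, phi n Y (P i) = r)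
    (hU : ∀ i, phi n U (P i) = r') (hU' : ∀ i, phi n U' (P i) = r')
    (hr' : r' - circumradiusSq n σ ≠ 0) (hUU' : phi n U U' = 4 * (r' - circumradiusSq n σ))
    (hXU : phi n X U = phi n Y U') :
    phi n X Y = 4 * (r - circumradiusSq n σ) := by
  have hXX := hP.dotProduct_sub_centroid_self hX
  have hYY := hP.dotProduct_sub_centroid_self hY
  have hUU := hP.dotProduct_sub_centroid_self hU
  have hU'U' := hP.dotProduct_sub_centroid_self hU'
  have hXn := hP.sub_centroid_mem_normalSpace hX
  have hYn := hP.sub_centroid_mem_normalSpace hY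
  have hUn := hP.sub_centroid_mem_normalSpace hU
  have hUn' := hP.sub_centroid_mem_normalSpace hU'
  set C := centroid P
  have hanti : U' - C = -(U - C) := by
    refine hP.eq_of_dotProduct_eq hσ hUn' (neg_mem hUn) hUn (hUU ▸ hr') ?_
    rw [phi_eq_dotProduct_sub_sub U U' C, hUU, hU'U'] at hUU'
    rw [neg_dotProduct, hUU, dotProduct_comm]
    linear_combination -hUU' / 2
  have hYX : Y - C = -(X - C) := by
    refine hP.eq_of_dotProduct_eq hσ hYn (neg_mem hXn) hUn (hUU ▸ hr') ?_
    rw [phi_eq_dotProduct_sub_sub X U C, phi_eq_dotProduct_sub_sub Y U' C, hXX, hYY, hUU, hU'U',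
      hanti, dotProduct_neg] at hXU
    rw [neg_dotProduct]
    linear_combination -hXU / 2
  rw [phi_eq_dotProduct_sub_sub X Y C, hXX, hYY, hYX, dotProduct_neg, hXX]
  ring

end NormalLine
theorem exists_isometry_apply_eq_apply_eq {E : Type*} [NormedAddCommGroup E]
    [InnerProductSpace ℝ E] {a b x y : E} (h : dist a b = dist x y) :
    ∃ Φ : E → E, Isometry Φ ∧ Φ a = x ∧ Φ b = y := by
  set R := Submodule.reflection (ℝ ∙ ((b - a) - (y - x)))ᗮ
  have hR : R (b - a) = y - x :=
    Submodule.reflection_sub (by rw [← dist_eq_norm', h, dist_eq_norm'])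
  refine ⟨fun z => x + R (z - a), Isometry.of_dist_eq fun z z' => ?_, by simp, ?_⟩
  · rw [dist_add_left, dist_eq_norm, ← map_sub, R.norm_map, sub_sub_sub_cancel_right,
      dist_eq_norm]
  · simp only [hR, add_sub_cancel]

variable {n : ℕ}

/-- `simplexVertex n s` is the regular simplex `(s / √2) • eₖ` of side `s`, and `simplexAxis n s h`
the point at signed height `h` above its centroid `(s / (√2 n)) • 𝟙`, along the unit normal
`𝟙 / √n`. -/
noncomputable def simplexVertex (n : ℕ) (s : ℝ) (k : Fin n) : EuclideanSpace ℝ (Fin n) :=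
  WithLp.toLp 2 fun j => if j = k then s / √2 else 0

noncomputable def simplexAxis (n : ℕ) (s h : ℝ) : EuclideanSpace ℝ (Fin n) :=
  WithLp.toLp 2 fun _ => s / (√2 * n) + h / √n

lemma dist_simplexVertex {s : ℝ} (hs : 0 ≤ s) {k l : Fin n} (hkl : k ≠ l) :
    dist (simplexVertex n s k) (simplexVertex n s l) = s := by
  rw [← sq_eq_sq₀ dist_nonneg hs, EuclideanSpace.dist_sq_eq]
  have hj : ∀ j : Fin n, dist (simplexVertex n s k j) (simplexVertex n s l j) ^ 2 =
      (if j = k then s ^ 2 / 2 else 0) + (if j = l then s ^ 2 / 2 else 0) := by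
    intro j
    simp only [simplexVertex, Real.dist_eq, sq_abs]
    split_ifs with hk hl <;> first
      | exact absurd (hk.symm.trans hl) hkl
      | simp only [sub_zero, zero_sub, neg_sq, div_pow, Real.sq_sqrt zero_le_two]; ring
  simp only [hj, sum_add_distrib, sum_ite_eq', mem_univ, if_true]
  ring

lemma dist_simplexAxis [NeZero n] (s h h' : ℝ) :
    dist (simplexAxis n s h) (simplexAxis n s h') = |h - h'| := by
  have hn : (0 : ℝ) < n := Nat.cast_pos.2 (Nat.pos_of_neZero n)
  rw [← sq_eq_sq₀ dist_nonneg (abs_nonneg _), EuclideanSpace.dist_sq_eq, sq_abs]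
  simp only [simplexAxis, Real.dist_eq, sq_abs, sum_const, card_univ, Fintype.card_fin,
    nsmul_eq_mul]
  field_simp
  rw [Real.sq_sqrt hn.le]
  ring

lemma dist_simplexAxis_simplexVertex [NeZero n] {s h r : ℝ} (hr : 0 ≤ r)
    (hsum : h ^ 2 + circumradiusSq n (s ^ 2) = r ^ 2) (k : Fin n) :
    dist (simplexAxis n s h) (simplexVertex n s k) = r := by
  have hn : (0 : ℝ) < n := Nat.cast_pos.2 (Nat.pos_of_neZero n)
  set c := s / (√2 * n) + h / √n
  rw [← sq_eq_sq₀ dist_nonneg hr, EuclideanSpace.dist_sq_eq, ← hsum]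
  have hj : ∀ j : Fin n, dist (simplexAxis n s h j) (simplexVertex n s k j) ^ 2 =
      c ^ 2 + (if j = k then (s / √2) ^ 2 - 2 * c * (s / √2) else 0) := by
    intro j
    simp only [simplexVertex, simplexAxis, Real.dist_eq, sq_abs]
    split_ifs <;> ring
  simp only [hj, sum_add_distrib, sum_ite_eq', mem_univ, if_true, sum_const, card_univ,
    Fintype.card_fin, nsmul_eq_mul, c, circumradiusSq]
  field_simp
  linear_combination (-s ^ 2 * (n - 1) * √(n : ℝ) ^ 2) * Real.sq_sqrt zero_le_two +
    (-2 * n * h ^ 2 * √2 ^ 2) * Real.sq_sqrt hn.le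

lemma UnitPreservingOn.mono {S T : Set (EuclideanSpace ℝ (Fin n))}
    {f : EuclideanSpace ℝ (Fin n) → Fin n → ℂ} (hf : UnitPreservingOn n T f) (hST : S ⊆ T) :
    UnitPreservingOn n S f :=
  fun a ha b hb hab => hf a (hST ha) b (hST hb) hab

open Filter

/-- `∀ᶠ f in unitDistanceFilter n, p f` says that finitely many unit-distance constraints
force `p f`. -/
def unitDistanceFilter (n : ℕ) : Filter (EuclideanSpace ℝ (Fin n) → Fin n → ℂ) :=
  ⨅ S : Finset (EuclideanSpace ℝ (Fin n)), 𝓟 {f | UnitPreservingOn n S f}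

lemma eventually_unitDistanceFilter {p : (EuclideanSpace ℝ (Fin n) → Fin n → ℂ) → Prop} :
    (∀ᶠ f in unitDistanceFilter n, p f) ↔
      ∃ S : Finset (EuclideanSpace ℝ (Fin n)), ∀ f, UnitPreservingOn n S f → p f := by
  refine (hasBasis_iInf_principal fun S T => ⟨S ∪ T, ?_, ?_⟩).eventually_iff.trans ?_
  · exact fun f hf => hf.mono (by simp)
  · exact fun f hf => hf.mono (by simp)
  · simp

lemma memD_iff_eventually {d : ℝ} :
    MemD n d ↔ 0 < d ∧ ∀ x y, dist x y = d →
      ∀ᶠ f in unitDistanceFilter n, phi n (f x) (f y) = (d : ℂ) ^ 2 := by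
  refine and_congr_right fun _ => forall₂_congr fun x y => imp_congr_right fun _ => ?_
  rw [eventually_unitDistanceFilter]
  refine ⟨fun ⟨S, _, _, hS⟩ => ⟨S, hS⟩, fun ⟨S, hS⟩ => ⟨insert x (insert y S), by simp, by simp,
    fun f hf => hS f (hf.mono (Finset.coe_subset.2
      ((Finset.subset_insert _ _).trans (Finset.subset_insert _ _))))⟩⟩

variable {d : ℝ}

lemma MemD.eventually (hd : MemD n d) {x y : EuclideanSpace ℝ (Fin n)} (hxy : dist x y = d) :
    ∀ᶠ f in unitDistanceFilter n, phi n (f x) (f y) = (d : ℂ) ^ 2 :=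
  (memD_iff_eventually.1 hd).2 x y hxy

lemma memD_one : MemD n 1 := by
  refine memD_iff_eventually.2 ⟨one_pos, fun x y hxy => eventually_unitDistanceFilter.2
    ⟨{x, y}, fun f hf => ?_⟩⟩
  simpa using hf x (by simp) y (by simp) hxy

lemma MemD.eventually_isEquilateral {ι : Type*} [Finite ι] (hd : MemD n d)
    {q : ι → EuclideanSpace ℝ (Fin n)} (hq : ∀ i j, i ≠ j → dist (q i) (q j) = d) :
    ∀ᶠ f in unitDistanceFilter n, IsEquilateral (fun i => f (q i)) ((d : ℂ) ^ 2) :=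
  eventually_all.2 fun i => eventually_all.2 fun j =>
    eventually_imp_distrib_left.2 fun hij => hd.eventually (hq i j hij)

lemma MemD.eventually_forall_phi_eq {ι : Type*} [Finite ι] (hd : MemD n d)
    {z : EuclideanSpace ℝ (Fin n)} {q : ι → EuclideanSpace ℝ (Fin n)}
    (hz : ∀ i, dist z (q i) = d) :
    ∀ᶠ f in unitDistanceFilter n, ∀ i, phi n (f z) (f (q i)) = (d : ℂ) ^ 2 :=
  eventually_all.2 fun i => hd.eventually (hz i)

lemma exists_dist_eq_dist_eq (hn : 2 ≤ n) {x y : EuclideanSpace ℝ (Fin n)} {r : ℝ}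
    (hd : 0 ≤ d) (hdr : d ≤ r) (hxy : dist x y = r) :
    ∃ z, dist z x = d ∧ dist z y = r := by
  have : NeZero n := ⟨by omega⟩
  have hcirc : circumradiusSq n (d ^ 2) ≤ r ^ 2 := by
    have hn' : (0 : ℝ) < n := by positivity
    have hdr2 : d ^ 2 ≤ r ^ 2 := pow_le_pow_left₀ hd hdr 2
    rw [circumradiusSq, div_le_iff₀ (by positivity)]
    nlinarith
  set h := √(r ^ 2 - circumradiusSq n (d ^ 2))
  have hvert : ∀ k, dist (simplexAxis n d h) (simplexVertex n d k) = r :=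
    dist_simplexAxis_simplexVertex (hd.trans hdr)
      (by rw [Real.sq_sqrt (sub_nonneg.2 hcirc)]; ring)
  obtain ⟨Φ, hΦ, hx, hy⟩ := exists_isometry_apply_eq_apply_eq
    (a := simplexVertex n d ⟨0, by omega⟩) (b := simplexAxis n d h) (x := x) (y := y)
    (by rw [dist_comm, hvert, hxy])
  refine ⟨Φ (simplexVertex n d ⟨1, by omega⟩), ?_, ?_⟩
  · rw [← hx, hΦ.dist_eq, dist_simplexVertex hd (by simp)]
  · rw [← hy, hΦ.dist_eq, dist_comm, hvert]

lemma ofReal_sqrt_mul_sq {a : ℝ} (ha : 0 ≤ a) (d : ℝ) : ((√a * d : ℝ) : ℂ) ^ 2 = a * d ^ 2 := by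
  rw [← Complex.ofReal_pow, mul_pow, Real.sq_sqrt ha, Complex.ofReal_mul, Complex.ofReal_pow]

theorem MemD.eventually_eq_or_phi_eq [NeZero n] (hd : MemD n d) {x y : EuclideanSpace ℝ (Fin n)}
    (hxy : dist x y = √(2 + 2 / n) * d) :
    ∀ᶠ f in unitDistanceFilter n,
      f x = f y ∨ phi n (f x) (f y) = ((√(2 + 2 / n) * d : ℝ) : ℂ) ^ 2 := by
  have hd0 := hd.1
  have hn : (0 : ℝ) < n := Nat.cast_pos.2 (Nat.pos_of_neZero n)
  set h := √(2 + 2 / n) * d / 2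
  obtain ⟨Φ, hΦ, hx, hy⟩ := exists_isometry_apply_eq_apply_eq
    (a := simplexAxis n d h) (b := simplexAxis n d (-h)) (x := x) (y := y)
    (by rw [dist_simplexAxis, hxy, sub_neg_eq_add, add_halves, abs_of_pos (by positivity)])
  have hapex : ∀ t, t ^ 2 = h ^ 2 → ∀ k,
      dist (Φ (simplexAxis n d t)) (Φ (simplexVertex n d k)) = d := by
    intro t ht k
    rw [hΦ.dist_eq]
    refine dist_simplexAxis_simplexVertex hd0.le ?_ k
    rw [ht, div_pow, mul_pow, Real.sq_sqrt (by positivity), circumradiusSq]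
    field_simp
    ring
  filter_upwards [hd.eventually_isEquilateral (q := fun k => Φ (simplexVertex n d k))
      fun k l hkl => by rw [hΦ.dist_eq, dist_simplexVertex hd0.le hkl],
    hd.eventually_forall_phi_eq (hx ▸ hapex h rfl),
    hd.eventually_forall_phi_eq (hy ▸ hapex (-h) (neg_sq h))] with f hP hX hY
  have hn' : (n : ℂ) ≠ 0 := Nat.cast_ne_zero.2 (NeZero.ne n)
  have hd' : (d : ℂ) ≠ 0 := Complex.ofReal_ne_zero.2 hd0.ne'
  refine (hP.eq_or_phi_eq (pow_ne_zero 2 hd') hX hY ?_).imp_right fun hXY => hXY.trans ?_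
  · have : (d : ℂ) ^ 2 - circumradiusSq n ((d : ℂ) ^ 2) = ((n + 1) * d ^ 2 / (2 * n) : ℝ) := by
      push_cast [circumradiusSq]
      field_simp
      ring
    rw [this]
    exact Complex.ofReal_ne_zero.2 (by positivity)
  · rw [ofReal_sqrt_mul_sq (by positivity), circumradiusSq]
    push_cast
    field_simp
    ring

theorem MemD.sqrt_two_add_mul (hn : 2 ≤ n) (hd : MemD n d) : MemD n (√(2 + 2 / n) * d) := by
  have : NeZero n := ⟨by omega⟩
  have hd0 := hd.1
  have hlt : d < √(2 + 2 / n) * d := lt_mul_of_one_lt_left hd0 <|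
    (Real.lt_sqrt zero_le_one).2 (by linarith [show (0 : ℝ) ≤ 2 / n by positivity])
  have hne : ((√(2 + 2 / n) * d : ℝ) : ℂ) ^ 2 ≠ (d : ℂ) ^ 2 := by
    rw [← Complex.ofReal_pow, ← Complex.ofReal_pow, Ne, Complex.ofReal_inj]
    exact (pow_lt_pow_left₀ hlt hd0.le two_ne_zero).ne'
  refine memD_iff_eventually.2 ⟨hd0.trans hlt, fun x y hxy => ?_⟩
  obtain ⟨z, hzx, hzy⟩ := exists_dist_eq_dist_eq hn hd0.le hlt.le hxy
  filter_upwards [hd.eventually_eq_or_phi_eq hxy, hd.eventually_eq_or_phi_eq hzy, hd.eventually hzx]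
    with f hfxy hfzy hfzx
  refine hfxy.resolve_left fun hfxy => ?_
  rw [hfxy] at hfzx
  rcases hfzy with hfzy | hfzy
  · rw [hfzy, phi_self] at hfzx
    exact pow_ne_zero 2 (Complex.ofReal_ne_zero.2 hd0.ne') hfzx.symm
  · exact hne (hfzy.symm.trans hfzx)

theorem MemD.two_div_mul [NeZero n] (hd : MemD n d) (hα : MemD n (√(2 + 2 / n) * d))
    (hα2 : MemD n ((2 + 2 / n) * d)) : MemD n (2 / n * d) := by
  have hd0 := hd.1
  have hn : (0 : ℝ) < n := Nat.cast_pos.2 (Nat.pos_of_neZero n)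
  set s := √(2 + 2 / n) * d
  have hs0 : 0 < s := hα.1
  have hs2 : s ^ 2 = (2 + 2 / n) * d ^ 2 := by rw [mul_pow, Real.sq_sqrt (by positivity)]
  have hcirc : circumradiusSq n (s ^ 2) = (n ^ 2 - 1) * d ^ 2 / n ^ 2 := by
    rw [hs2, circumradiusSq]
    field_simp
    ring
  refine memD_iff_eventually.2 ⟨by positivity, fun x y hxy => ?_⟩
  obtain ⟨Φ, hΦ, hx, hy⟩ := exists_isometry_apply_eq_apply_eq
    (a := simplexAxis n s (d / n)) (b := simplexAxis n s (-(d / n))) (x := x) (y := y)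
    (by rw [dist_simplexAxis, hxy, sub_neg_eq_add, abs_of_pos (by positivity)]; ring)
  have haxis : ∀ a b, dist (Φ (simplexAxis n s a)) (Φ (simplexAxis n s b)) = |a - b| :=
    fun a b => by rw [hΦ.dist_eq, dist_simplexAxis]
  have hvert : ∀ {a r : ℝ}, 0 ≤ r → a ^ 2 + circumradiusSq n (s ^ 2) = r ^ 2 →
      ∀ k, dist (Φ (simplexAxis n s a)) (Φ (simplexVertex n s k)) = r :=
    fun hr ha k => by rw [hΦ.dist_eq]; exact dist_simplexAxis_simplexVertex hr ha k
  have hX : ∀ a, a ^ 2 = (d / n) ^ 2 →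
      ∀ k, dist (Φ (simplexAxis n s a)) (Φ (simplexVertex n s k)) = d :=
    fun a ha => hvert hd0.le (by rw [ha, hcirc]; field_simp; ring)
  have hU : ∀ a, a ^ 2 = (d / n + d) ^ 2 →
      ∀ k, dist (Φ (simplexAxis n s a)) (Φ (simplexVertex n s k)) = s :=
    fun a ha => hvert hs0.le (by rw [ha, hcirc, hs2]; field_simp; ring)
  filter_upwards [hα.eventually_isEquilateral (q := fun k => Φ (simplexVertex n s k))
      fun k l hkl => by rw [hΦ.dist_eq, dist_simplexVertex hs0.le hkl],
    hd.eventually_forall_phi_eq (hx ▸ hX (d / n) rfl),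
    hd.eventually_forall_phi_eq (hy ▸ hX (-(d / n)) (neg_sq (d / n))),
    hα.eventually_forall_phi_eq (hU (d / n + d) rfl),
    hα.eventually_forall_phi_eq (hU (-(d / n + d)) (neg_sq _)),
    hd.eventually (x := x) (y := Φ (simplexAxis n s (d / n + d)))
      (by rw [← hx, haxis, sub_add_cancel_left, abs_neg, abs_of_pos hd0]),
    hd.eventually (x := y) (y := Φ (simplexAxis n s (-(d / n + d))))
      (by rw [← hy, haxis, neg_sub_neg, add_sub_cancel_left, abs_of_pos hd0]),
    hα2.eventually (x := Φ (simplexAxis n s (d / n + d)))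
      (y := Φ (simplexAxis n s (-(d / n + d))))
      (by rw [haxis, sub_neg_eq_add, abs_of_pos (by positivity)]; ring)]
    with f hP hfX hfY hfU hfU' hXU hYU' hUU'
  have hn' : (n : ℂ) ≠ 0 := Nat.cast_ne_zero.2 (NeZero.ne n)
  have hd' : (d : ℂ) ≠ 0 := Complex.ofReal_ne_zero.2 hd0.ne'
  have hsC : (s : ℂ) ^ 2 = (2 + 2 / n) * d ^ 2 := by
    rw [ofReal_sqrt_mul_sq (by positivity)]
    push_cast
    ring
  have hσ : (s : ℂ) ^ 2 - circumradiusSq n ((s : ℂ) ^ 2) = ((n + 1) ^ 2 * d ^ 2 / n ^ 2 : ℝ) := by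
    push_cast [hsC, circumradiusSq]
    field_simp
    ring
  refine (hP.phi_eq_of_antipodal (pow_ne_zero 2 (Complex.ofReal_ne_zero.2 hs0.ne'))
    hfX hfY hfU hfU' (hσ ▸ Complex.ofReal_ne_zero.2 (by positivity)) ?_
    (hXU.trans hYU'.symm)).trans ?_
  · rw [hUU', hσ]
    push_cast
    field_simp
    ring
  · push_cast [hsC, circumradiusSq]
    field_simp
    ring

theorem memD_sqrt_pow_mul_pow (hn : 2 ≤ n) (k l : ℕ) :
    MemD n (√(2 + 2 / n) ^ k * (2 / (n : ℝ)) ^ l) := by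
  have : NeZero n := ⟨by omega⟩
  have hα2 : √(2 + 2 / (n : ℝ)) ^ 2 = 2 + 2 / n := Real.sq_sqrt (by positivity)
  induction l generalizing k with
  | zero =>
    induction k with
    | zero => simpa using memD_one
    | succ k ih =>
      convert ih.sqrt_two_add_mul hn using 1
      ring
  | succ l ih =>
    convert (ih k).two_div_mul (by convert ih (k + 1) using 1; ring)
      (by convert ih (k + 2) using 1; rw [pow_add, hα2]; ring) using 1
    ring

theorem stmt18 (n : ℕ) (hn : 3 ≤ n) (x y : EuclideanSpace ℝ (Fin n)) (k l : ℕ)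
    (hxy : dist x y = (Real.sqrt (2 + 2 / n)) ^ k * (2 / (n : ℝ)) ^ l) :
    ∃ S : Finset (EuclideanSpace ℝ (Fin n)), x ∈ S ∧ y ∈ S ∧
      ∀ f : EuclideanSpace ℝ (Fin n) → (Fin n → ℂ),
        UnitPreservingOn n (↑S) f →
          phi n (f x) (f y) = ((dist x y : ℝ) : ℂ) ^ 2 := by
  rw [hxy]
  exact (memD_sqrt_pow_mul_pow (by omega) k l).2 x y hxy
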